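/- arXiv:2305.08606 — 2 statements merged into one kernel-verified Lean document; each statement's English description precedes it below -/
import Mathlib

section
/- Let p and q be complex polynomials with deg p = n > m = deg q, and define the complex-valued harmonic polynomial f(z) = p(z) + conj(q(z)). Then the zero set {z ∈ ℂ : f(z) = 0} is finite and has at most n² elements. -/
open Complex Polynomial

noncomputable section WilmshurstAux

namespace WilmshurstAux

/-- The `k`-th coefficient (in `w`) of the polynomial `p(z) + (conj q)(w)`,
as an element of `ℂ[z]`. -/
def aF (p q : Polynomial ℂ) (k : ℕ) : Polynomial ℂ :=
  Polynomial.C ((starRingEnd ℂ) (q.coeff k)) + if k = 0 then p else 0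

/-- Entry of the Sylvester-type matrix: row shift `i`, column (monomial degree) `d`. -/
def ent (p q : Polynomial ℂ) (i d : ℕ) : Polynomial ℂ :=
  if i ≤ d then aF p q (d - i) else 0

/-- Degree represented by a column. -/
def colDeg (n : ℕ) {m : ℕ} (c : Fin n ⊕ Fin m) : ℕ :=
  Sum.elim (fun j : Fin n => (j : ℕ)) (fun j : Fin m => n + (j : ℕ)) c

/-- Column degree bound. -/
def colB (n : ℕ) {m : ℕ} (c : Fin n ⊕ Fin m) : ℕ :=
  Sum.elim (fun _ : Fin n => n) (fun _ : Fin m => 0) c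

/-- The Sylvester-type matrix of `p(z) + (conj q)(w)` and `q(z) + (conj p)(w)`
with respect to `w`, over `ℂ[z]`. -/
def wilM (p q : Polynomial ℂ) (n m : ℕ) :
    Matrix (Fin n ⊕ Fin m) (Fin n ⊕ Fin m) (Polynomial ℂ) :=
  fun r c => Sum.elim (fun i : Fin n => ent p q (i : ℕ)) (fun i : Fin m => ent q p (i : ℕ)) r
    (colDeg n c)

@[simp] lemma wilM_inl_inl (p q : Polynomial ℂ) (n m : ℕ) (i : Fin n) (j : Fin n) :
    wilM p q n m (Sum.inl i) (Sum.inl (j : Fin n)) = ent p q (i : ℕ) (j : ℕ) := rfl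

@[simp] lemma wilM_inl_inr (p q : Polynomial ℂ) (n m : ℕ) (i : Fin n) (j : Fin m) :
    wilM p q n m (Sum.inl i) (Sum.inr j) = ent p q (i : ℕ) (n + (j : ℕ)) := rfl

@[simp] lemma wilM_inr_inl (p q : Polynomial ℂ) (n m : ℕ) (i : Fin m) (j : Fin n) :
    wilM p q n m (Sum.inr i) (Sum.inl j) = ent q p (i : ℕ) (j : ℕ) := rfl

@[simp] lemma wilM_inr_inr (p q : Polynomial ℂ) (n m : ℕ) (i : Fin m) (j : Fin m) :
    wilM p q n m (Sum.inr i) (Sum.inr j) = ent q p (i : ℕ) (n + (j : ℕ)) := rfl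

lemma ent_of_lt (p q : Polynomial ℂ) {i d : ℕ} (h : i < d) :
    ent p q i d = Polynomial.C ((starRingEnd ℂ) (q.coeff (d - i))) := by
  rw [ent, if_pos h.le, aF, if_neg (by omega), add_zero]

lemma ent_diag (p q : Polynomial ℂ) (i : ℕ) :
    ent p q i i = Polynomial.C ((starRingEnd ℂ) (q.coeff 0)) + p := by
  simp [ent, aF]

lemma ent_of_gt (p q : Polynomial ℂ) {i d : ℕ} (h : d < i) : ent p q i d = 0 := by
  rw [ent, if_neg (by omega)]

lemma natDegree_ent_le (p q : Polynomial ℂ) (i d : ℕ) :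
    (ent p q i d).natDegree ≤ p.natDegree := by
  rcases lt_trichotomy i d with h | h | h
  · rw [ent_of_lt p q h]; simp
  · subst h; rw [ent_diag]
    refine (natDegree_add_le _ _).trans ?_
    simp
  · rw [ent_of_gt p q h]; simp

/-- Row-sum identity: evaluating a row of the Sylvester matrix against powers of `conj z`. -/
lemma row_sum (p q : Polynomial ℂ) (mq i K : ℕ) (hq : q.natDegree ≤ mq)
    (hiK : i + mq < K) (z : ℂ) :
    ∑ d ∈ Finset.range K, (ent p q i d).eval z * (starRingEnd ℂ) z ^ d
      = (starRingEnd ℂ) z ^ i * (p.eval z + (starRingEnd ℂ) (q.eval z)) := by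
  set w := (starRingEnd ℂ) z with hw
  obtain ⟨L, rfl⟩ : ∃ L, K = i + L := ⟨K - i, by omega⟩
  have hL : mq < L := by omega
  rw [Finset.sum_range_add]
  have h1 : ∑ d ∈ Finset.range i, (ent p q i d).eval z * w ^ d = 0 := by
    refine Finset.sum_eq_zero fun d hd => ?_
    rw [Finset.mem_range] at hd
    rw [ent_of_gt p q hd, eval_zero, zero_mul]
  rw [h1, zero_add]
  have h2 : ∀ k, ent p q i (i + k) = aF p q k := by
    intro k
    rw [ent, if_pos (Nat.le_add_right i k), Nat.add_sub_cancel_left]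
  have h3 : ∑ k ∈ Finset.range L, (ent p q i (i + k)).eval z * w ^ (i + k)
      = w ^ i * ∑ k ∈ Finset.range L, (aF p q k).eval z * w ^ k := by
    rw [Finset.mul_sum]
    refine Finset.sum_congr rfl fun k _ => ?_
    rw [h2, pow_add]; ring
  rw [h3]
  congr 1
  have h4 : ∀ k, (aF p q k).eval z
      = (starRingEnd ℂ) (q.coeff k) + if k = 0 then p.eval z else 0 := by
    intro k
    simp [aF, apply_ite (Polynomial.eval z)]
  have h5 : ∑ k ∈ Finset.range L, (aF p q k).eval z * w ^ k
      = (∑ k ∈ Finset.range L, (starRingEnd ℂ) (q.coeff k) * w ^ k)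
        + ∑ k ∈ Finset.range L, (if k = 0 then p.eval z * w ^ k else 0) := by
    rw [← Finset.sum_add_distrib]
    refine Finset.sum_congr rfl fun k _ => ?_
    rw [h4]
    split_ifs <;> ring
  rw [h5]
  have h6 : ∑ k ∈ Finset.range L, (starRingEnd ℂ) (q.coeff k) * w ^ k
      = (starRingEnd ℂ) (q.eval z) := by
    have hdeg : (q.map (starRingEnd ℂ)).natDegree < L :=
      lt_of_le_of_lt (natDegree_map_le.trans hq) hL
    have he := Polynomial.eval_eq_sum_range' hdeg w
    have he2 : (q.map (starRingEnd ℂ)).eval w = (starRingEnd ℂ) (q.eval z) := by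
      rw [hw, Polynomial.eval_map, Polynomial.eval₂_at_apply]
    rw [← he2, he]
    refine Finset.sum_congr rfl fun k _ => ?_
    rw [Polynomial.coeff_map]
  have h7 : ∑ k ∈ Finset.range L, (if k = 0 then p.eval z * w ^ k else 0) = p.eval z := by
    rw [Finset.sum_ite_eq' (Finset.range L) 0 (fun k => p.eval z * w ^ k)]
    rw [if_pos (Finset.mem_range.mpr (by omega))]
    simp
  rw [h6, h7]
  ring

/-- At each zero of `p(z) + conj (q(z))`, the evaluated Sylvester matrix is singular. -/
lemma eval_det_eq_zero (p q : Polynomial ℂ) (n m : ℕ) (hpn : p.natDegree = n)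
    (hqm : q.natDegree = m) (hnm : n > m) (z : ℂ)
    (hz : p.eval z + (starRingEnd ℂ) (q.eval z) = 0) :
    ((wilM p q n m).det).eval z = 0 := by
  have h0n : 0 < n := lt_of_le_of_lt (Nat.zero_le m) hnm
  set w := (starRingEnd ℂ) z with hw
  set v : (Fin n ⊕ Fin m) → ℂ := fun c => w ^ colDeg n c with hv
  have hv0 : v ≠ 0 := by
    intro h
    have h1 : v (Sum.inl ⟨0, h0n⟩) = 1 := by simp [hv, colDeg]
    rw [h] at h1
    simp at h1
  have hsum : ∀ f : ℕ → ℂ,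
      ∑ c : Fin n ⊕ Fin m, f (colDeg n c) = ∑ d ∈ Finset.range (n + m), f d := by
    intro f
    rw [Fintype.sum_sum_type, Finset.sum_range_add]
    congr 1
    · simpa [colDeg] using Fin.sum_univ_eq_sum_range (fun d => f d) n
    · simpa [colDeg] using Fin.sum_univ_eq_sum_range (fun d => f (n + d)) m
  have hmul : ((wilM p q n m).map (Polynomial.eval z)).mulVec v = 0 := by
    funext r
    have hexp : ((wilM p q n m).map (Polynomial.eval z)).mulVec v r
        = ∑ c : Fin n ⊕ Fin m, (wilM p q n m r c).eval z * v c := by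
      simp [Matrix.mulVec, dotProduct, Matrix.map_apply]
    rw [hexp]
    cases r with
    | inl i =>
      have : ∑ c : Fin n ⊕ Fin m, (wilM p q n m (Sum.inl i) c).eval z * v c
          = ∑ d ∈ Finset.range (n + m), (ent p q (i : ℕ) d).eval z * w ^ d :=
        hsum (fun d => (ent p q (i : ℕ) d).eval z * w ^ d)
      rw [this, row_sum p q m (i : ℕ) (n + m) hqm.le (by omega) z, ← hw, hz, mul_zero]
      rfl
    | inr i =>
      have : ∑ c : Fin n ⊕ Fin m, (wilM p q n m (Sum.inr i) c).eval z * v c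
          = ∑ d ∈ Finset.range (n + m), (ent q p (i : ℕ) d).eval z * w ^ d :=
        hsum (fun d => (ent q p (i : ℕ) d).eval z * w ^ d)
      have hz' : q.eval z + (starRingEnd ℂ) (p.eval z) = 0 := by
        have := congrArg (starRingEnd ℂ) hz
        simpa [map_add, add_comm] using this
      rw [this, row_sum q p n (i : ℕ) (n + m) hpn.le (by omega) z, ← hw, hz', mul_zero]
      rfl
  have hdet0 : ((wilM p q n m).map (Polynomial.eval z)).det = 0 :=
    Matrix.exists_mulVec_eq_zero_iff.mp ⟨v, hv0, hmul⟩
  have := (Polynomial.evalRingHom z).map_det (wilM p q n m)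
  simpa [hdet0] using this

/-- The coefficient-extraction matrix. -/
def Lmat (p q : Polynomial ℂ) (n m : ℕ) : Matrix (Fin n ⊕ Fin m) (Fin n ⊕ Fin m) ℂ :=
  fun r c => (wilM p q n m r c).coeff (colB n c)

lemma entry_inr_isC (p q : Polynomial ℂ) (n m : ℕ) (hnm : n > m)
    (r : Fin n ⊕ Fin m) (j : Fin m) :
    wilM p q n m r (Sum.inr j) = Polynomial.C ((wilM p q n m r (Sum.inr j)).coeff 0) := by
  cases r with
  | inl i =>
    have hi : (i : ℕ) < n + (j : ℕ) := lt_of_lt_of_le i.isLt (Nat.le_add_right n j)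
    rw [wilM_inl_inr, ent_of_lt p q hi]
    simp
  | inr i =>
    have hi : (i : ℕ) < n + (j : ℕ) :=
      lt_of_lt_of_le (lt_trans i.isLt hnm) (Nat.le_add_right n j)
    rw [wilM_inr_inr, ent_of_lt q p hi]
    simp

lemma natDegree_entry_le (p q : Polynomial ℂ) (n m : ℕ) (hpn : p.natDegree = n)
    (hqm : q.natDegree = m) (hnm : n > m) (r c : Fin n ⊕ Fin m) :
    (wilM p q n m r c).natDegree ≤ colB n c := by
  cases c with
  | inl j =>
    cases r with
    | inl i =>
      refine (natDegree_ent_le p q (i : ℕ) ((Sum.inl j : Fin n ⊕ Fin m) |> colDeg n)).trans ?_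
      simp [colB, hpn]
    | inr i =>
      refine (natDegree_ent_le q p (i : ℕ) ((Sum.inl j : Fin n ⊕ Fin m) |> colDeg n)).trans ?_
      simp [colB, hqm]
      omega
  | inr j =>
    rw [entry_inr_isC p q n m hnm r j]
    simp [colB]

lemma natDegree_det_le (p q : Polynomial ℂ) (n m : ℕ) (hpn : p.natDegree = n)
    (hqm : q.natDegree = m) (hnm : n > m) :
    (wilM p q n m).det.natDegree ≤ n * n := by
  rw [Matrix.det_apply']
  refine natDegree_sum_le_of_forall_le _ _ fun σ _ => ?_
  refine (natDegree_mul_le).trans ?_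
  rw [natDegree_intCast, zero_add]
  refine (natDegree_prod_le _ _).trans ?_
  have h1 : ∑ c : Fin n ⊕ Fin m, (wilM p q n m (σ c) c).natDegree
      ≤ ∑ c : Fin n ⊕ Fin m, colB n c :=
    Finset.sum_le_sum fun c _ => natDegree_entry_le p q n m hpn hqm hnm (σ c) c
  refine h1.trans ?_
  rw [Fintype.sum_sum_type]
  simp [colB, Finset.sum_const, Finset.card_univ, mul_comm]

lemma coeff_det_eq (p q : Polynomial ℂ) (n m : ℕ) (hpn : p.natDegree = n)
    (hqm : q.natDegree = m) (hnm : n > m) :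
    (wilM p q n m).det.coeff (n * n) = (Lmat p q n m).det := by
  rw [Matrix.det_apply', Matrix.det_apply', finset_sum_coeff]
  refine Finset.sum_congr rfl fun σ _ => ?_
  have hcast : (((Equiv.Perm.sign σ : ℤ) : Polynomial ℂ))
      = Polynomial.C (((Equiv.Perm.sign σ : ℤ) : ℂ)) := (Polynomial.C_eq_intCast _).symm
  rw [hcast, coeff_C_mul]
  congr 1
  rw [Fintype.prod_sum_type, Fintype.prod_sum_type]
  have hconst : ∏ j : Fin m, wilM p q n m (σ (Sum.inr j)) (Sum.inr j)
      = Polynomial.C (∏ j : Fin m, (wilM p q n m (σ (Sum.inr j)) (Sum.inr j)).coeff 0) := by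
    rw [map_prod]
    exact Finset.prod_congr rfl fun j _ => entry_inr_isC p q n m hnm (σ (Sum.inr j)) j
  rw [hconst, coeff_mul_C]
  have hbound : ∀ j ∈ (Finset.univ : Finset (Fin n)),
      (wilM p q n m (σ (Sum.inl j)) (Sum.inl j)).natDegree ≤ n := by
    intro j _
    refine (natDegree_entry_le p q n m hpn hqm hnm (σ (Sum.inl j)) (Sum.inl j)).trans ?_
    simp [colB]
  have hprod := Polynomial.coeff_prod_of_natDegree_le
    (f := fun j : Fin n => wilM p q n m (σ (Sum.inl j)) (Sum.inl j)) (n := n)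
    (s := Finset.univ) hbound
  have hcard : (Finset.univ : Finset (Fin n)).card * n = n * n := by
    simp [Finset.card_univ]
  rw [hcard] at hprod
  rw [hprod]
  rfl

lemma det_Lmat (p q : Polynomial ℂ) (n m : ℕ) (hpn : p.natDegree = n)
    (hqm : q.natDegree = m) (hnm : n > m) :
    (Lmat p q n m).det
      = p.leadingCoeff ^ n * ((starRingEnd ℂ) p.leadingCoeff) ^ m := by
  have h0n : 0 < n := lt_of_le_of_lt (Nat.zero_le m) hnm
  set Bm : Matrix (Fin n) (Fin m) ℂ :=
    fun i j => (wilM p q n m (Sum.inl i) (Sum.inr j)).coeff 0 with hBm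
  set Dm : Matrix (Fin m) (Fin m) ℂ :=
    fun i j => (wilM p q n m (Sum.inr i) (Sum.inr j)).coeff 0 with hDm
  have hL : Lmat p q n m
      = Matrix.fromBlocks (Matrix.diagonal fun _ => p.leadingCoeff) Bm 0 Dm := by
    ext r c
    cases r with
    | inl i =>
      cases c with
      | inl j =>
        show (wilM p q n m (Sum.inl i) (Sum.inl j)).coeff (colB n (Sum.inl j)) = _
        rw [wilM_inl_inl]
        show (ent p q (i : ℕ) (j : ℕ)).coeff n = Matrix.diagonal (fun _ => p.leadingCoeff) i j
        rcases lt_trichotomy (i : ℕ) (j : ℕ) with h | h | h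
        · rw [ent_of_lt p q h, Polynomial.coeff_C, if_neg (by omega),
            Matrix.diagonal_apply_ne _ (by intro hij; rw [hij] at h; omega)]
        · have hij : i = j := Fin.ext h
          subst hij
          rw [ent_diag, Matrix.diagonal_apply_eq]
          rw [Polynomial.coeff_add, Polynomial.coeff_C, if_neg (by omega), zero_add]
          rw [Polynomial.leadingCoeff, hpn]
        · rw [ent_of_gt p q h, Matrix.diagonal_apply_ne _ (by intro hij; rw [hij] at h; omega)]
          simp
      | inr j => rfl
    | inr i =>
      cases c with
      | inl j =>
        show (wilM p q n m (Sum.inr i) (Sum.inl j)).coeff (colB n (Sum.inl j)) = _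
        rw [wilM_inr_inl]
        show (ent q p (i : ℕ) (j : ℕ)).coeff n = (0 : Matrix (Fin m) (Fin n) ℂ) i j
        have hqn : q.coeff n = 0 :=
          Polynomial.coeff_eq_zero_of_natDegree_lt (by rw [hqm]; exact hnm)
        rcases lt_trichotomy (i : ℕ) (j : ℕ) with h | h | h
        · rw [ent_of_lt q p h, Polynomial.coeff_C, if_neg (by omega)]; rfl
        · have hij : (i : ℕ) = (j : ℕ) := h
          rw [ent, if_pos (by omega), aF, if_pos (by omega)]
          rw [Polynomial.coeff_add, Polynomial.coeff_C, if_neg (by omega), zero_add, hqn]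
          rfl
        · rw [ent_of_gt q p h]; simp
      | inr j => rfl
  rw [hL, Matrix.det_fromBlocks_zero₂₁, Matrix.det_diagonal, Finset.prod_const,
    Finset.card_univ, Fintype.card_fin]
  congr 1
  have htri : Dm.BlockTriangular OrderDual.toDual := by
    intro i j hij
    have hij' : (i : ℕ) < (j : ℕ) := hij
    have hi : (i : ℕ) < n + (j : ℕ) :=
      lt_of_lt_of_le (lt_trans i.isLt hnm) (Nat.le_add_right n j)
    show (wilM p q n m (Sum.inr i) (Sum.inr j)).coeff 0 = 0
    rw [wilM_inr_inr, ent_of_lt q p hi, Polynomial.coeff_C, if_pos rfl]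
    have : p.coeff (n + (j : ℕ) - (i : ℕ)) = 0 :=
      Polynomial.coeff_eq_zero_of_natDegree_lt (by omega)
    rw [this, map_zero]
  rw [Matrix.det_of_lowerTriangular Dm htri]
  have hdiag : ∀ i : Fin m, Dm i i = (starRingEnd ℂ) p.leadingCoeff := by
    intro i
    have hi : (i : ℕ) < n + (i : ℕ) :=
      lt_of_lt_of_le (lt_trans i.isLt hnm) (Nat.le_add_right n i)
    show (wilM p q n m (Sum.inr i) (Sum.inr i)).coeff 0 = _
    rw [wilM_inr_inr, ent_of_lt q p hi, Polynomial.coeff_C, if_pos rfl]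
    congr 1
    rw [Polynomial.leadingCoeff, hpn]
    congr 1
    omega
  rw [Finset.prod_congr rfl fun i _ => hdiag i, Finset.prod_const, Finset.card_univ,
    Fintype.card_fin]

end WilmshurstAux

end WilmshurstAux

open WilmshurstAux in
theorem wilmshurst_upper_bound (p q : Polynomial ℂ) (n m : ℕ)
    (hpn : p.natDegree = n) (hqm : q.natDegree = m) (hnm : n > m) :
    {z : ℂ | p.eval z + (starRingEnd ℂ) (q.eval z) = 0}.Finite ∧
      {z : ℂ | p.eval z + (starRingEnd ℂ) (q.eval z) = 0}.ncard ≤ n ^ 2 := by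
  have h0n : 0 < n := lt_of_le_of_lt (Nat.zero_le m) hnm
  have hp0 : p ≠ 0 := by
    intro h
    rw [h, Polynomial.natDegree_zero] at hpn
    omega
  set R := (wilM p q n m).det with hR
  have hcoeff : R.coeff (n * n)
      = p.leadingCoeff ^ n * ((starRingEnd ℂ) p.leadingCoeff) ^ m := by
    rw [hR, coeff_det_eq p q n m hpn hqm hnm, det_Lmat p q n m hpn hqm hnm]
  have hlc : p.leadingCoeff ≠ 0 := Polynomial.leadingCoeff_ne_zero.mpr hp0
  have hR0 : R ≠ 0 := by
    intro h
    rw [h, Polynomial.coeff_zero] at hcoeff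
    have : p.leadingCoeff ^ n * ((starRingEnd ℂ) p.leadingCoeff) ^ m ≠ 0 := by
      apply mul_ne_zero (pow_ne_zero _ hlc) (pow_ne_zero _ (by simpa using hlc))
    exact this hcoeff.symm
  have hsub : {z : ℂ | p.eval z + (starRingEnd ℂ) (q.eval z) = 0}
      ⊆ {z : ℂ | R.IsRoot z} := by
    intro z hz
    exact eval_det_eq_zero p q n m hpn hqm hnm z hz
  have hfin : {z : ℂ | R.IsRoot z}.Finite := Polynomial.finite_setOf_isRoot hR0
  refine ⟨hfin.subset hsub, ?_⟩
  refine le_trans (Set.ncard_le_ncard hsub hfin) ?_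
  have hset : {z : ℂ | R.IsRoot z} = ↑R.roots.toFinset := by
    ext z
    simp [Polynomial.mem_roots', hR0, Polynomial.IsRoot.def]
  rw [hset, Set.ncard_coe_finset]
  calc R.roots.toFinset.card ≤ Multiset.card R.roots := R.roots.toFinset_card_le
    _ ≤ R.natDegree := Polynomial.card_roots' R
    _ ≤ n * n := natDegree_det_le p q n m hpn hqm hnm
    _ = n ^ 2 := (sq n).symm
end

section
/- Let f and g be nonzero polynomials in two real variables x and y with real coefficients (elements of ℝ[x,y]) that are relatively prime, with total degree of f equal to n and total degree of g equal to m. Then the set of common zeros {(x, y) ∈ ℝ² : f(x, y) = 0 and g(x, y) = 0} is finite and has at most m·n elements. -/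
open MvPolynomial Finset Module

noncomputable section BezoutAux

private def deg2 (s : Fin 2 →₀ ℕ) : ℕ := s 0 + s 1

private lemma sum_eq_deg2 (s : Fin 2 →₀ ℕ) : (s.sum fun _ e => e) = deg2 s := by
  rw [Finsupp.sum_fintype _ _ (fun _ => rfl), Fin.sum_univ_two]; rfl

private lemma totalDegree_eq_sup (p : MvPolynomial (Fin 2) ℝ) :
    p.totalDegree = p.support.sup deg2 := by
  unfold MvPolynomial.totalDegree
  exact Finset.sup_congr rfl fun s _ => sum_eq_deg2 s

private lemma le_totalDegree2 {p : MvPolynomial (Fin 2) ℝ} {d : Fin 2 →₀ ℕ}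
    (h : d ∈ p.support) : deg2 d ≤ p.totalDegree := by
  rw [totalDegree_eq_sup]; exact Finset.le_sup h

private lemma deg2_le_of_mem {p : MvPolynomial (Fin 2) ℝ} {d : Fin 2 →₀ ℕ}
    (h : coeff d p ≠ 0) : deg2 d ≤ p.totalDegree :=
  le_totalDegree2 (by simpa [MvPolynomial.mem_support_iff] using h)

set_option maxHeartbeats 1000000 in
private lemma add_le_totalDegree_mul {p q : MvPolynomial (Fin 2) ℝ}
    (hp : p ≠ 0) (hq : q ≠ 0) :
    p.totalDegree + q.totalDegree ≤ (p * q).totalDegree := by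
  set a := p.totalDegree with ha
  set b := q.totalDegree with hb
  -- pick a monomial of p of degree a with maximal first exponent
  have hps : (p.support.filter fun s => deg2 s = a).Nonempty := by
    obtain ⟨d, hd, hda⟩ := Finset.exists_mem_eq_sup p.support
      (MvPolynomial.support_nonempty.mpr hp) deg2
    exact ⟨d, Finset.mem_filter.mpr ⟨hd, by rw [ha, totalDegree_eq_sup, hda]⟩⟩
  have hqs : (q.support.filter fun s => deg2 s = b).Nonempty := by
    obtain ⟨d, hd, hda⟩ := Finset.exists_mem_eq_sup q.support
      (MvPolynomial.support_nonempty.mpr hq) deg2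
    exact ⟨d, Finset.mem_filter.mpr ⟨hd, by rw [hb, totalDegree_eq_sup, hda]⟩⟩
  obtain ⟨d, hd, hdmax⟩ := Finset.exists_max_image _ (fun s => s 0) hps
  obtain ⟨e, he, hemax⟩ := Finset.exists_max_image _ (fun s => s 0) hqs
  rw [Finset.mem_filter] at hd he
  have hcoeff : coeff (d + e) (p * q) = coeff d p * coeff e q := by
    rw [MvPolynomial.coeff_mul]
    have hmem : ((d, e) : (Fin 2 →₀ ℕ) × (Fin 2 →₀ ℕ)) ∈ Finset.HasAntidiagonal.antidiagonal (d + e) :=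
      Finset.HasAntidiagonal.mem_antidiagonal.mpr rfl
    refine Finset.sum_eq_single_of_mem (d, e) hmem ?_
    · rintro ⟨u, v⟩ huv hne
      rw [Finset.HasAntidiagonal.mem_antidiagonal] at huv
      by_contra hzero
      have hu : coeff u p ≠ 0 := fun h => hzero (by simp [h])
      have hv : coeff v q ≠ 0 := fun h => hzero (by simp [h])
      have hud : deg2 u ≤ a := deg2_le_of_mem hu
      have hvd : deg2 v ≤ b := deg2_le_of_mem hv
      have huv0 : u 0 + v 0 = d 0 + e 0 := by
        have := congrArg (fun w => w 0) huv; simpa using this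
      have huv1 : u 1 + v 1 = d 1 + e 1 := by
        have := congrArg (fun w => w 1) huv; simpa using this
      have hda := hd.2; have hea := he.2
      simp only [deg2] at hud hvd hda hea
      have hua : deg2 u = a := by simp only [deg2]; omega
      have hvb : deg2 v = b := by simp only [deg2]; omega
      have hu0 : u 0 ≤ d 0 := hdmax u (Finset.mem_filter.mpr
        ⟨MvPolynomial.mem_support_iff.mpr hu, hua⟩)
      have hv0 : v 0 ≤ e 0 := hemax v (Finset.mem_filter.mpr
        ⟨MvPolynomial.mem_support_iff.mpr hv, hvb⟩)
      simp only [deg2] at hua hvb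
      apply hne
      have hud' : u = d := Finsupp.ext (Fin.forall_fin_two.mpr
        ⟨by omega, by omega⟩)
      have hvd' : v = e := Finsupp.ext (Fin.forall_fin_two.mpr
        ⟨by omega, by omega⟩)
      rw [hud', hvd']
  have hne0 : coeff (d + e) (p * q) ≠ 0 := by
    rw [hcoeff]
    exact mul_ne_zero (MvPolynomial.mem_support_iff.mp hd.1)
      (MvPolynomial.mem_support_iff.mp he.1)
  have := deg2_le_of_mem hne0
  simp only [deg2, Finsupp.add_apply] at this
  have hda := hd.2; have hea := he.2
  simp only [deg2] at hda hea
  omega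


private def Pdim (e : ℕ) : ℕ := finrank ℝ (restrictTotalDegree (Fin 2) ℝ e)

private def sigmaSet (e : ℕ) : Finset (Σ _ : ℕ, ℕ) :=
  (range (e+1)).sigma fun i => range (e+1-i)

private def idxEquiv (e : ℕ) :
    {n : Fin 2 →₀ ℕ | (n.sum fun _ k => k) ≤ e} ≃ (sigmaSet e : Finset (Σ _ : ℕ, ℕ)) where
  toFun v := ⟨⟨v.1 0, v.1 1⟩, by
    have hv := v.2
    simp only [Set.mem_setOf_eq] at hv
    rw [Finsupp.sum_fintype _ _ (fun _ => rfl), Fin.sum_univ_two] at hv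
    simp only [sigmaSet, Finset.mem_sigma, Finset.mem_range]
    omega⟩
  invFun x := ⟨Finsupp.single 0 x.1.1 + Finsupp.single 1 x.1.2, by
    have hx := x.2
    simp only [sigmaSet, Finset.mem_sigma, Finset.mem_range] at hx
    simp only [Set.mem_setOf_eq]
    rw [Finsupp.sum_fintype _ _ (fun _ => rfl), Fin.sum_univ_two]
    simp [Finsupp.single_apply]
    omega⟩
  left_inv v := by
    ext i
    fin_cases i <;> simp [Finsupp.single_apply]
  right_inv x := by
    ext <;> simp [Finsupp.single_apply]

private lemma two_mul_Pdim (e : ℕ) : 2 * Pdim e = (e + 1) * (e + 2) := by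
  have hsum : ∀ k : ℕ, 2 * ∑ i ∈ range k, (k - i) = k * (k + 1) := by
    intro k
    induction k with
    | zero => simp
    | succ k ih =>
      rw [Finset.sum_range_succ']
      have h1 : ∀ i ∈ range k, (k + 1 - (i+1)) = k - i := fun i _ => by omega
      rw [Finset.sum_congr rfl h1]
      have h2 : k + 1 - 0 = k + 1 := by omega
      rw [h2]
      calc 2 * (∑ i ∈ range k, (k - i) + (k + 1))
          = 2 * ∑ i ∈ range k, (k - i) + 2 * (k + 1) := by ring
        _ = k * (k + 1) + 2 * (k + 1) := by rw [ih]
        _ = (k + 1) * (k + 1 + 1) := by ring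
  letI : Fintype {n : Fin 2 →₀ ℕ | (n.sum fun _ k => k) ≤ e} :=
    Fintype.ofEquiv _ (idxEquiv e).symm
  have h1 : Pdim e = Fintype.card {n : Fin 2 →₀ ℕ | (n.sum fun _ k => k) ≤ e} :=
    Module.finrank_eq_card_basis
      (MvPolynomial.basisRestrictSupport ℝ {n : Fin 2 →₀ ℕ | (n.sum fun _ k => k) ≤ e})
  have hcard : Pdim e = (sigmaSet e).card := by
    rw [h1, Fintype.card_congr (idxEquiv e), Fintype.card_coe]
  rw [hcard]
  rw [sigmaSet, Finset.card_sigma]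
  simp only [Finset.card_range]
  rw [hsum (e+1)]


private def evalAt (P : ℝ × ℝ) : MvPolynomial (Fin 2) ℝ →ₐ[ℝ] ℝ := aeval ![P.1, P.2]

private lemma evalAt_apply (P : ℝ × ℝ) (p : MvPolynomial (Fin 2) ℝ) :
    evalAt P p = eval ![P.1, P.2] p := by
  rw [evalAt, aeval_def, eval, ← Algebra.algebraMap_self (R := ℝ)]
  rfl

private def linP (a b : ℝ × ℝ) : MvPolynomial (Fin 2) ℝ :=
  if a.1 = b.1 then X 1 - C b.2 else X 0 - C b.1

private lemma linP_totalDegree (a b : ℝ × ℝ) : (linP a b).totalDegree ≤ 1 := by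
  unfold linP
  split <;>
  · rw [sub_eq_add_neg, ← map_neg]
    refine le_trans (totalDegree_add _ _) ?_
    simp [totalDegree_X]

private lemma evalAt_linP_self (a b : ℝ × ℝ) : evalAt b (linP a b) = 0 := by
  unfold linP
  split <;> simp [evalAt]

private lemma evalAt_linP_ne (a b : ℝ × ℝ) (hab : a ≠ b) : evalAt a (linP a b) ≠ 0 := by
  unfold linP
  split
  · rename_i h
    have : a.2 ≠ b.2 := fun h2 => hab (Prod.ext h h2)
    simp [evalAt, sub_eq_zero, this]
  · rename_i h
    simp [evalAt, sub_eq_zero, h]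

set_option synthInstance.maxHeartbeats 1000000 in
set_option maxHeartbeats 2000000 in
private lemma card_le_mul {f g : MvPolynomial (Fin 2) ℝ}
    (hf : f ≠ 0) (hg : g ≠ 0) (hcop : IsRelPrime f g) (T : Finset (ℝ × ℝ))
    (hT : ∀ P ∈ T, eval ![P.1, P.2] f = 0 ∧ eval ![P.1, P.2] g = 0) :
    T.card ≤ g.totalDegree * f.totalDegree := by
  classical
  set n := f.totalDegree with hn
  set m := g.totalDegree with hm
  set N := T.card with hN
  -- enumerate the points
  let pt : Fin N → ℝ × ℝ := fun i => (T.equivFin.symm i : ℝ × ℝ)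
  have hptinj : Function.Injective pt := fun i j h =>
    T.equivFin.symm.injective (Subtype.ext h)
  have hptT : ∀ i, pt i ∈ T := fun i => (T.equivFin.symm i).2
  have hptf : ∀ i, evalAt (pt i) f = 0 := fun i => by
    rw [evalAt_apply]; exact (hT _ (hptT i)).1
  have hptg : ∀ i, evalAt (pt i) g = 0 := fun i => by
    rw [evalAt_apply]; exact (hT _ (hptT i)).2
  -- evaluation linear map
  let Φ : MvPolynomial (Fin 2) ℝ →ₗ[ℝ] (Fin N → ℝ) :=
    LinearMap.pi fun i => (evalAt (pt i)).toLinearMap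
  have hΦ : ∀ p i, Φ p i = evalAt (pt i) p := fun p i => rfl
  let Pd := restrictTotalDegree (Fin 2) ℝ (m + n + N)
  let Ψ : Pd →ₗ[ℝ] (Fin N → ℝ) := Φ.comp Pd.subtype
  -- separators
  let sep : Fin N → MvPolynomial (Fin 2) ℝ := fun i =>
    ∏ j ∈ Finset.univ.erase i, linP (pt i) (pt j)
  have hsepdeg : ∀ i, (sep i).totalDegree ≤ m + n + N := by
    intro i
    refine le_trans (totalDegree_finset_prod _ _) ?_
    refine le_trans (Finset.sum_le_card_nsmul _ _ 1 fun j _ => linP_totalDegree _ _) ?_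
    simp only [smul_eq_mul, mul_one]
    have : (Finset.univ.erase i).card ≤ N := le_trans (Finset.card_erase_le)
      (by simp)
    omega
  have hsep_self : ∀ i, evalAt (pt i) (sep i) ≠ 0 := by
    intro i
    rw [map_prod]
    refine Finset.prod_ne_zero_iff.mpr fun j hj => ?_
    refine evalAt_linP_ne _ _ fun h => (Finset.mem_erase.mp hj).1 ?_
    exact (hptinj h).symm
  have hsep_other : ∀ i j, j ≠ i → evalAt (pt j) (sep i) = 0 := by
    intro i j hji
    rw [map_prod]
    exact Finset.prod_eq_zero (Finset.mem_erase.mpr ⟨hji, Finset.mem_univ _⟩)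
      (evalAt_linP_self _ _)
  -- surjectivity of the evaluation map on Pd
  have hΨsurj : Function.Surjective Ψ := by
    intro c
    refine ⟨∑ i, (c i / evalAt (pt i) (sep i)) •
      (⟨sep i, (mem_restrictTotalDegree _ _ _).mpr (hsepdeg i)⟩ : Pd), ?_⟩
    funext k
    have hco : ((∑ i, (c i / evalAt (pt i) (sep i)) •
        (⟨sep i, (mem_restrictTotalDegree _ _ _).mpr (hsepdeg i)⟩ : Pd) : Pd) :
          MvPolynomial (Fin 2) ℝ) =
        ∑ i, (c i / evalAt (pt i) (sep i)) • sep i := by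
      push_cast
      rfl
    show Φ (Pd.subtype _) k = c k
    rw [Submodule.subtype_apply, hco, hΦ, map_sum]
    rw [Finset.sum_eq_single k]
    · rw [map_smul, smul_eq_mul, div_mul_cancel₀ _ (hsep_self k)]
    · intro i _ hik
      rw [map_smul, smul_eq_mul, hsep_other i k hik.symm, mul_zero]
    · intro h; exact absurd (Finset.mem_univ k) h
  -- the subspace f·P(m+N) + g·P(n+N)
  let Pmn := restrictTotalDegree (Fin 2) ℝ (m + N)
  let Pnn := restrictTotalDegree (Fin 2) ℝ (n + N)
  let PN := restrictTotalDegree (Fin 2) ℝ N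
  let θ : (Pmn × Pnn) →ₗ[ℝ] MvPolynomial (Fin 2) ℝ :=
    ((LinearMap.mulLeft ℝ f).comp Pmn.subtype).coprod
      ((LinearMap.mulLeft ℝ g).comp Pnn.subtype)
  have hθ : ∀ x : Pmn × Pnn, θ x = f * (x.1 : MvPolynomial (Fin 2) ℝ) + g * x.2 :=
    fun x => rfl
  have hWPd : LinearMap.range θ ≤ Pd := by
    rintro x ⟨⟨a, b⟩, rfl⟩
    show θ (a, b) ∈ restrictTotalDegree (Fin 2) ℝ (m + n + N)
    rw [mem_restrictTotalDegree,
      show θ (a, b) = f * (a : MvPolynomial (Fin 2) ℝ) + g * b from rfl]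
    have hadeg := (mem_restrictTotalDegree _ _ _).mp a.2
    have hbdeg := (mem_restrictTotalDegree _ _ _).mp b.2
    refine le_trans (totalDegree_add _ _) (max_le ?_ ?_)
    · exact le_trans (totalDegree_mul _ _) (by omega)
    · exact le_trans (totalDegree_mul _ _) (by omega)
  have hWker : LinearMap.range θ ≤ LinearMap.ker Φ := by
    rintro x ⟨⟨a, b⟩, rfl⟩
    rw [LinearMap.mem_ker]
    funext i
    rw [hΦ, hθ, map_add, map_mul, map_mul, hptf i, hptg i]
    show (0 : ℝ) * _ + 0 * _ = (0 : Fin N → ℝ) i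
    simp
  -- the kernel of θ is controlled by PN
  have hmemPmn : ∀ h : PN, -g * (h : MvPolynomial (Fin 2) ℝ) ∈ Pmn := by
    intro h
    have := (mem_restrictTotalDegree _ _ _).mp h.2
    rw [mem_restrictTotalDegree]
    refine le_trans (totalDegree_mul _ _) ?_
    rw [totalDegree_neg]
    omega
  have hmemPnn : ∀ h : PN, f * (h : MvPolynomial (Fin 2) ℝ) ∈ Pnn := by
    intro h
    have := (mem_restrictTotalDegree _ _ _).mp h.2
    rw [mem_restrictTotalDegree]
    refine le_trans (totalDegree_mul _ _) ?_
    omega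
  let σm : PN →ₗ[ℝ] (Pmn × Pnn) :=
    (LinearMap.codRestrict Pmn ((LinearMap.mulLeft ℝ (-g)).comp PN.subtype) hmemPmn).prod
      (LinearMap.codRestrict Pnn ((LinearMap.mulLeft ℝ f).comp PN.subtype) hmemPnn)
  have hσm : ∀ h : PN, σm h =
      (⟨-g * (h : MvPolynomial (Fin 2) ℝ), hmemPmn h⟩,
       ⟨f * (h : MvPolynomial (Fin 2) ℝ), hmemPnn h⟩) := fun h => rfl
  have hσinj : Function.Injective σm := by
    intro x y hxy
    have h2 : f * (x : MvPolynomial (Fin 2) ℝ) = f * (y : MvPolynomial (Fin 2) ℝ) := by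
      have := congrArg (fun z => ((z.2 : Pnn) : MvPolynomial (Fin 2) ℝ)) hxy
      simpa [hσm] using this
    exact Subtype.ext (mul_left_cancel₀ hf h2)
  have hkerθ : LinearMap.ker θ ≤ LinearMap.range σm := by
    rintro ⟨a, b⟩ hab
    rw [LinearMap.mem_ker, hθ] at hab
    have hdvd : f ∣ (b : MvPolynomial (Fin 2) ℝ) := by
      refine hcop.dvd_of_dvd_mul_left ⟨-(a : MvPolynomial (Fin 2) ℝ), ?_⟩
      linear_combination hab
    obtain ⟨h, hh⟩ := hdvd
    have hhdeg : h.totalDegree ≤ N := by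
      by_cases h0 : h = 0
      · simp [h0]
      · have hlow := add_le_totalDegree_mul hf h0
        have hbdeg := (mem_restrictTotalDegree _ _ _).mp b.2
        rw [← hh] at hlow
        omega
    refine ⟨⟨h, (mem_restrictTotalDegree _ _ _).mpr hhdeg⟩, ?_⟩
    rw [hσm]
    have hfa : f * ((a : MvPolynomial (Fin 2) ℝ) + g * h) = 0 := by
      linear_combination hab - g * hh
    have ha : (a : MvPolynomial (Fin 2) ℝ) = -g * h := by
      rcases mul_eq_zero.mp hfa with h1 | h1
      · exact absurd h1 hf
      · rw [neg_mul]; exact eq_neg_of_add_eq_zero_left h1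
    refine Prod.ext (Subtype.ext ?_) (Subtype.ext ?_)
    · exact ha.symm
    · exact hh.symm
  -- rank bookkeeping
  haveI : FiniteDimensional ℝ Pd := inferInstance
  have e1 : finrank ℝ (LinearMap.range Ψ) + finrank ℝ (LinearMap.ker Ψ) =
      finrank ℝ Pd := LinearMap.finrank_range_add_finrank_ker Ψ
  have e1' : finrank ℝ (LinearMap.range Ψ) = N := by
    rw [LinearMap.range_eq_top.mpr hΨsurj, finrank_top, Module.finrank_fin_fun]
  have e4 : finrank ℝ (LinearMap.range θ) + finrank ℝ (LinearMap.ker θ) =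
      finrank ℝ (Pmn × Pnn) := LinearMap.finrank_range_add_finrank_ker θ
  have e4' : finrank ℝ (Pmn × Pnn) = Pdim (m + N) + Pdim (n + N) :=
    Module.finrank_prod
  have e5 : finrank ℝ (LinearMap.ker θ) ≤ Pdim N :=
    le_trans (Submodule.finrank_mono hkerθ)
      (le_of_eq (LinearMap.finrank_range_of_inj hσinj))
  have e3 : finrank ℝ ((LinearMap.range θ).comap Pd.subtype) =
      finrank ℝ (LinearMap.range θ) :=
    (Submodule.comapSubtypeEquivOfLe hWPd).finrank_eq
  have e2 : finrank ℝ ((LinearMap.range θ).comap Pd.subtype) ≤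
      finrank ℝ (LinearMap.ker Ψ) := by
    refine Submodule.finrank_mono ?_
    intro x hx
    rw [Submodule.mem_comap] at hx
    rw [LinearMap.mem_ker]
    show Φ (Pd.subtype x) = 0
    rw [Submodule.subtype_apply]
    exact hWker hx
  have ePd : finrank ℝ Pd = Pdim (m + n + N) := rfl
  have key2 : 2 * (Pdim (m + n + N) + Pdim N) =
      2 * (Pdim (m + N) + Pdim (n + N) + m * n) := by
    have k1 := two_mul_Pdim (m + n + N)
    have k2 := two_mul_Pdim N
    have k3 := two_mul_Pdim (m + N)
    have k4 := two_mul_Pdim (n + N)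
    zify at k1 k2 k3 k4 ⊢
    linear_combination k1 + k2 - k3 - k4
  omega

end BezoutAux

theorem bezout_real_points (f g : MvPolynomial (Fin 2) ℝ) (n m : ℕ)
    (hf : f ≠ 0) (hg : g ≠ 0) (hcop : IsRelPrime f g)
    (hfn : f.totalDegree = n) (hgm : g.totalDegree = m) :
    {P : ℝ × ℝ | MvPolynomial.eval ![P.1, P.2] f = 0 ∧
        MvPolynomial.eval ![P.1, P.2] g = 0}.Finite ∧
      {P : ℝ × ℝ | MvPolynomial.eval ![P.1, P.2] f = 0 ∧
        MvPolynomial.eval ![P.1, P.2] g = 0}.ncard ≤ m * n := by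
  set S := {P : ℝ × ℝ | MvPolynomial.eval ![P.1, P.2] f = 0 ∧
      MvPolynomial.eval ![P.1, P.2] g = 0} with hS
  have key : ∀ T : Finset (ℝ × ℝ), ↑T ⊆ S → T.card ≤ m * n := by
    intro T hTS
    have h := card_le_mul hf hg hcop T (fun P hP => hTS hP)
    rw [hfn, hgm] at h
    exact h
  have hfin : S.Finite := by
    by_contra hinf
    obtain ⟨t, hts, htc⟩ :=
      (Set.Infinite.exists_subset_card_eq hinf (m * n + 1))
    have := key t hts
    omega
  refine ⟨hfin, ?_⟩
  rw [Set.ncard_eq_toFinset_card _ hfin]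
  exact key hfin.toFinset (by simp)
end
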